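/- Let R be a ring with proper involution and let m be a positive integer. An element a ∈ R has an m-weak group inverse if and only if a has a Drazin inverse d and there exists an idempotent p ∈ R (p^2 = p) such that a + p is right invertible, d^* a^m p = 0, and d R = (1 - p) R (i.e. d = (1 - p) u and 1 - p = d v for some u, v ∈ R). In this case, d (1 - p) is an m-weak group inverse of a. -/

import Mathlib

/-- `z` is an `m`-weak group inverse of `a`. -/
def IsMWGI {R : Type*} [Ring R] [StarRing R] (m : ℕ) (a z : R) : Prop :=
  a * z ^ 2 = z ∧ ∃ k : ℕ, z * a ^ (k + 1) = a ^ k ∧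
    star (a ^ k) * a ^ (m + 1) * z = star (a ^ k) * a ^ m

/-- `w` is a weak group inverse of `b`. -/
def IsWGI {R : Type*} [Ring R] [StarRing R] (b w : R) : Prop :=
  b * w ^ 2 = w ∧ star (star b * b ^ 2 * w) = star b * b ^ 2 * w ∧
    ∃ k : ℕ, b ^ k = w * b ^ (k + 1)

/-- `x` is a group inverse of `u`. -/
def IsGroupInv {R : Type*} [Ring R] (u x : R) : Prop :=
  u * x ^ 2 = x ∧ u * x = x * u ∧ u = u ^ 2 * x

/-- `d` is a Drazin inverse of `a`. -/
def IsDrazin {R : Type*} [Ring R] (a d : R) : Prop :=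
  a * d ^ 2 = d ∧ a * d = d * a ∧ ∃ k : ℕ, a ^ k = d * a ^ (k + 1)

/-- `y` is a core-EP inverse of `a`. -/
def IsCoreEP {R : Type*} [Ring R] [StarRing R] (a y : R) : Prop :=
  a * y ^ 2 = y ∧ star (a * y) = a * y ∧ ∃ k : ℕ, a ^ k = y * a ^ (k + 1)

/-! If `a z² = z` and `z a^(k+1) = a^k`, then `q = a z` is an idempotent with `q R = a^k R`, so
`a` is upper triangular with respect to `q` and `(1 - q) a` is nilpotent. The identity
`(a + 1 - q)(1 - z a + z) = 1 + (1 - q) a` then makes `a + (1 - q)` right invertible, and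
`z^(k+2) a^(k+1)` is a Drazin inverse of `a` with range `q R`; the remaining condition is the
`m`-weak group inverse equation for `z` in the form `(a^k)^* a^m (1 - q) = 0`. Conversely, with
`d` and `p` as in the statement, `a d (1 - p) = 1 - p`, which gives all three equations for
`d (1 - p)`. -/

section WeakInverse

variable {R : Type*} [Ring R] {a d p z : R} {k : ℕ}

lemma mul_pow_add_two_of_mul_sq (h : a * z ^ 2 = z) (j : ℕ) : a * z ^ (j + 2) = z ^ (j + 1) := by
  rw [add_comm j 2, pow_add, ← mul_assoc, h, ← pow_succ']

lemma pow_mul_pow_succ_of_mul_sq (h : a * z ^ 2 = z) : ∀ j : ℕ, a ^ j * z ^ (j + 1) = z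
  | 0 => by simp
  | j + 1 => by
    show a ^ (j + 1) * z ^ (j + 2) = z
    rw [pow_succ, mul_assoc, mul_pow_add_two_of_mul_sq h, pow_mul_pow_succ_of_mul_sq h j]

lemma pow_mul_pow_add_of_mul_pow_succ (h : z * a ^ (k + 1) = a ^ k) :
    ∀ j : ℕ, z ^ j * a ^ (k + j) = a ^ k
  | 0 => by simp
  | j + 1 => by
    rw [pow_succ, show k + (j + 1) = k + 1 + j by omega, pow_add, mul_assoc, ← mul_assoc z, h,
      ← pow_add, pow_mul_pow_add_of_mul_pow_succ h j]

lemma one_sub_mul_mul_pow_eq_zero (h1 : a * z ^ 2 = z) (h2 : z * a ^ (k + 1) = a ^ k) :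
    (1 - a * z) * a ^ k = 0 := by
  have : a * z * a ^ k = a ^ k := by rw [← h2, ← mul_assoc, mul_assoc a, ← sq, h1]
  rw [sub_mul, one_mul, this, sub_self]

lemma mul_mul_self_of_mul_sq (h1 : a * z ^ 2 = z) (h2 : z * a ^ (k + 1) = a ^ k) :
    z * a * z = z := by
  calc z * a * z = z * a * (a ^ k * z ^ (k + 1)) := by rw [pow_mul_pow_succ_of_mul_sq h1 k]
    _ = z * a ^ (k + 1) * z ^ (k + 1) := by simp only [pow_succ', mul_assoc]
    _ = z := by rw [h2, pow_mul_pow_succ_of_mul_sq h1]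

lemma isIdempotentElem_mul_of_mul_sq (h1 : a * z ^ 2 = z) (h2 : z * a ^ (k + 1) = a ^ k) :
    IsIdempotentElem (a * z) := by
  rw [IsIdempotentElem, mul_assoc, ← mul_assoc z, mul_mul_self_of_mul_sq h1 h2]

lemma mul_pow_succ_of_mul_mul_eq_mul (h : p * a * p = p * a) :
    ∀ j : ℕ, (p * a) ^ (j + 1) = p * a ^ (j + 1)
  | 0 => by simp
  | j + 1 => by
    rw [pow_succ', mul_pow_succ_of_mul_mul_eq_mul h j, ← mul_assoc, h, mul_assoc, ← pow_succ']

lemma isNilpotent_one_sub_mul_mul (h1 : a * z ^ 2 = z) (h2 : z * a ^ (k + 1) = a ^ k) :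
    IsNilpotent ((1 - a * z) * a) := by
  have hz : a * (a * z) = a ^ k * (a ^ 2 * z ^ (k + 1)) := by
    calc a * (a * z) = a * (a * (a ^ k * z ^ (k + 1))) := by rw [pow_mul_pow_succ_of_mul_sq h1 k]
      _ = a ^ k * (a ^ 2 * z ^ (k + 1)) := by
        rw [← mul_assoc a a, ← sq, ← mul_assoc, pow_mul_comm, mul_assoc]
  have hinv : (1 - a * z) * a * (1 - a * z) = (1 - a * z) * a := by
    rw [mul_sub, mul_one, sub_eq_self, mul_assoc, hz, ← mul_assoc,
      one_sub_mul_mul_pow_eq_zero h1 h2, zero_mul]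
  refine ⟨k + 1, ?_⟩
  rw [mul_pow_succ_of_mul_mul_eq_mul hinv, pow_succ, ← mul_assoc,
    one_sub_mul_mul_pow_eq_zero h1 h2, zero_mul]

lemma exists_add_one_sub_mul_mul_eq_one (h1 : a * z ^ 2 = z) (h2 : z * a ^ (k + 1) = a ^ k) :
    ∃ s, (a + (1 - a * z)) * s = 1 := by
  obtain ⟨u, hu⟩ := (isNilpotent_one_sub_mul_mul h1 h2).isUnit_one_add
  have hz : a * z * z = z := by rw [mul_assoc, ← sq, h1]
  have key : (a + (1 - a * z)) * (1 - z * a + z) = 1 + (1 - a * z) * a := by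
    simp only [add_mul, sub_mul, mul_add, mul_sub, one_mul, mul_one, ← mul_assoc, hz]
    abel
  refine ⟨(1 - z * a + z) * ↑u⁻¹, ?_⟩
  rw [← mul_assoc, key, ← hu, Units.mul_inv]

lemma isDrazin_pow_mul_pow (h1 : a * z ^ 2 = z) (h2 : z * a ^ (k + 1) = a ^ k) :
    IsDrazin a (z ^ (k + 2) * a ^ (k + 1)) := by
  have h2' : z * a ^ (k + 2) = a ^ (k + 1) := by
    rw [pow_succ a (k + 1), ← mul_assoc, h2, ← pow_succ]
  have had : a * (z ^ (k + 2) * a ^ (k + 1)) = z ^ (k + 1) * a ^ (k + 1) := by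
    rw [← mul_assoc, mul_pow_add_two_of_mul_sq h1]
  have hda : z ^ (k + 2) * a ^ (k + 1) * a = z ^ (k + 1) * a ^ (k + 1) := by
    rw [mul_assoc, ← pow_succ, pow_succ z, mul_assoc, h2']
  refine ⟨?_, had.trans hda.symm, k, ?_⟩
  · rw [sq, ← mul_assoc, had, mul_assoc, ← mul_assoc (a ^ (k + 1)),
      pow_mul_pow_succ_of_mul_sq h1 (k + 1), ← mul_assoc, ← pow_succ]
  · rw [mul_assoc, ← pow_add, show k + 1 + (k + 1) = k + (k + 2) by omega,
      pow_mul_pow_add_of_mul_pow_succ h2]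

variable [StarRing R]

lemma star_mul_pow_mul_one_sub_eq_zero {m : ℕ} (hd : a * d ^ 2 = d)
    (h3 : star (a ^ k) * a ^ (m + 1) * z = star (a ^ k) * a ^ m) :
    star d * a ^ m * (1 - a * z) = 0 := by
  have h : star (a ^ k) * a ^ m * (1 - a * z) = 0 := by
    rw [mul_sub, mul_one, ← mul_assoc, mul_assoc (star _) (a ^ m) a, ← pow_succ, h3, sub_self]
  rw [← pow_mul_pow_succ_of_mul_sq hd k, star_mul]
  simp only [mul_assoc] at h ⊢
  rw [h, mul_zero]

lemma IsMWGI.exists_isDrazin_polar {m : ℕ} (hz : IsMWGI m a z) :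
    ∃ d : R, IsDrazin a d ∧ ∃ p : R, p ^ 2 = p ∧
      (∃ s : R, (a + p) * s = 1) ∧
      star d * a ^ m * p = 0 ∧
      (∃ u : R, d = (1 - p) * u) ∧ (∃ v : R, 1 - p = d * v) := by
  obtain ⟨h1, k, h2, h3⟩ := hz
  have hd := isDrazin_pow_mul_pow h1 h2
  refine ⟨_, hd, 1 - a * z, ?_, exists_add_one_sub_mul_mul_eq_one h1 h2,
    star_mul_pow_mul_one_sub_eq_zero hd.1 h3, ⟨z ^ (k + 2) * a ^ (k + 1), ?_⟩,
    ⟨a * (a ^ (k + 1) * z ^ (k + 1)), ?_⟩⟩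
  · rw [sq, (isIdempotentElem_mul_of_mul_sq h1 h2).one_sub]
  · rw [sub_sub_cancel, mul_assoc, ← mul_assoc z, ← pow_succ', ← mul_assoc,
      mul_pow_add_two_of_mul_sq h1]
  · have hdz : z ^ (k + 2) * a ^ (k + 1) * (a ^ (k + 1) * z ^ (k + 1)) = z := by
      rw [mul_assoc, ← mul_assoc (a ^ (k + 1)), ← pow_add, ← mul_assoc,
        show k + 1 + (k + 1) = k + (k + 2) by omega, pow_mul_pow_add_of_mul_pow_succ h2,
        pow_mul_pow_succ_of_mul_sq h1]
    rw [sub_sub_cancel, ← mul_assoc, ← hd.2.1, mul_assoc, hdz]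

lemma IsDrazin.isMWGI_mul_one_sub {m : ℕ} {u v : R} (hd : IsDrazin a d) (hp : p ^ 2 = p)
    (hstar : star d * a ^ m * p = 0) (hu : d = (1 - p) * u) (hv : 1 - p = d * v) :
    IsMWGI m a (d * (1 - p)) := by
  obtain ⟨had2, hcomm, k, hk⟩ := hd
  have hpd : p * d = 0 := by
    rw [hu, ← mul_assoc, mul_sub, mul_one, ← sq, hp, sub_self, zero_mul]
  have had : a * (d * (1 - p)) = 1 - p := by
    rw [hv, ← mul_assoc d d v, ← sq, ← mul_assoc, had2]
  have hpa : p * a ^ (k + 1) = 0 := by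
    rw [pow_succ', hk, ← mul_assoc a d, hcomm, mul_assoc, ← mul_assoc p, hpd, zero_mul]
  have hs : star (a ^ k) * a ^ m * p = 0 := by
    rw [hk, star_mul]
    simp only [mul_assoc] at hstar ⊢
    rw [hstar, mul_zero]
  refine ⟨?_, k, ?_, ?_⟩
  · rw [sq, ← mul_assoc, had, ← mul_assoc, sub_mul, one_mul, hpd, sub_zero]
  · rw [mul_assoc, sub_mul, one_mul, hpa, mul_sub, mul_zero, sub_zero, hk]
  · rw [pow_succ]
    simp only [mul_assoc] at hs ⊢
    rw [had, mul_sub, mul_sub, mul_one, hs, sub_zero]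

end WeakInverse

theorem mwgi_iff_polar_like_general {R : Type*} [Ring R] [StarRing R]
    (m : ℕ) (a : R) :
    ((∃ z : R, IsMWGI m a z) ↔
      ∃ d : R, IsDrazin a d ∧ ∃ p : R, p ^ 2 = p ∧
        (∃ s : R, (a + p) * s = 1) ∧
        star d * a ^ m * p = 0 ∧
        (∃ u : R, d = (1 - p) * u) ∧ (∃ v : R, 1 - p = d * v)) ∧
      ∀ d p : R, IsDrazin a d → p ^ 2 = p →
        (∃ s : R, (a + p) * s = 1) →
        star d * a ^ m * p = 0 →
        (∃ u : R, d = (1 - p) * u) → (∃ v : R, 1 - p = d * v) →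
        IsMWGI m a (d * (1 - p)) :=
  ⟨⟨fun ⟨_, hz⟩ => hz.exists_isDrazin_polar,
      fun ⟨_, hd, _, hp, _, hstar, ⟨_, hu⟩, ⟨_, hv⟩⟩ =>
        ⟨_, hd.isMWGI_mul_one_sub hp hstar hu hv⟩⟩,
    fun _ _ hd hp _ hstar ⟨_, hu⟩ ⟨_, hv⟩ => hd.isMWGI_mul_one_sub hp hstar hu hv⟩

theorem mwgi_iff_polar_like {R : Type*} [Ring R] [StarRing R]
    (hproper : ∀ x : R, star x * x = 0 → x = 0)
    (m : ℕ) (hm : 0 < m) (a : R) :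
    ((∃ z : R, IsMWGI m a z) ↔
      ∃ d : R, IsDrazin a d ∧ ∃ p : R, p ^ 2 = p ∧
        (∃ s : R, (a + p) * s = 1) ∧
        star d * a ^ m * p = 0 ∧
        (∃ u : R, d = (1 - p) * u) ∧ (∃ v : R, 1 - p = d * v)) ∧
      ∀ d p : R, IsDrazin a d → p ^ 2 = p →
        (∃ s : R, (a + p) * s = 1) →
        star d * a ^ m * p = 0 →
        (∃ u : R, d = (1 - p) * u) → (∃ v : R, 1 - p = d * v) →
        IsMWGI m a (d * (1 - p)) :=
  mwgi_iff_polar_like_general m a
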